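/- The set {x⁸ : x ∈ ℕ⁺} is not closed in the Golomb space; in particular, 16 lies in the closure of {x⁸ : x ∈ ℕ⁺} but 16 is not an eighth power of a positive integer. -/

import Mathlib

/-- The base of the Golomb topology: arithmetic progressions `{a + b*n : n ≥ 0}`
with coprime `a, b ≥ 1`, viewed inside the positive integers. -/
def golombBasis : Set (Set ℕ+) :=
  {S | ∃ a b : ℕ, 1 ≤ a ∧ 1 ≤ b ∧ Nat.Coprime a b ∧
    S = {x : ℕ+ | ∃ n : ℕ, (x : ℕ) = a + b * n}}

/-- The Golomb (relatively prime integer) topology on `ℕ+`. -/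
instance golombTopology : TopologicalSpace ℕ+ :=
  TopologicalSpace.generateFrom golombBasis

/-!
The progressions through 16 are the `a + b n` with `b` odd, so 16 lies in the closure of the
eighth powers as soon as `x ^ 8 ≡ 16` is solvable modulo every odd `b`. By the Chinese remainder
theorem and Hensel's lemma it suffices to solve it modulo odd primes `p`, where Wang's factorization
`x ^ 8 - 16 = (x ^ 2 - 2) (x ^ 2 + 2) (x ^ 2 - 2 x + 2) (x ^ 2 + 2 x + 2)` has a root because one of
`2`, `-2`, `-1` is a square mod `p` (the third factor vanishes at `1 + √-1`).
-/

theorem isTopologicalBasis_golombBasis : TopologicalSpace.IsTopologicalBasis golombBasis := by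
  refine ⟨?_, ?_, rfl⟩
  · rintro _ ⟨a₁, b₁, -, hb₁, hab₁, rfl⟩ _ ⟨a₂, b₂, -, hb₂, hab₂, rfl⟩ x ⟨⟨n₁, hn₁⟩, ⟨n₂, hn₂⟩⟩
    have hx₁ : Nat.Coprime x b₁ := by rwa [hn₁, Nat.coprime_add_mul_left_left]
    have hx₂ : Nat.Coprime x b₂ := by rwa [hn₂, Nat.coprime_add_mul_left_left]
    refine ⟨{z | ∃ n : ℕ, (z : ℕ) = x + b₁ * b₂ * n},
      ⟨x, b₁ * b₂, x.pos, Nat.mul_pos hb₁ hb₂, hx₁.mul_right hx₂, rfl⟩,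
      ⟨0, by simp⟩, ?_⟩
    rintro z ⟨m, hm⟩
    exact ⟨⟨n₁ + b₂ * m, by rw [hm, hn₁]; ring⟩, ⟨n₂ + b₁ * m, by rw [hm, hn₂]; ring⟩⟩
  · refine Set.sUnion_eq_univ_iff.2 fun x => ⟨_, ⟨1, 1, le_rfl, le_rfl, Nat.coprime_one_left 1, rfl⟩,
      ⟨x - 1, by have := x.pos; omega⟩⟩

theorem mem_closure_of_forall_modEq {S : Set ℕ+} {y : ℕ+}
    (h : ∀ b : ℕ, Nat.Coprime y b → ∃ s ∈ S, (y : ℕ) ≤ s ∧ (y : ℕ) ≡ s [MOD b]) :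
    y ∈ closure S := by
  rw [isTopologicalBasis_golombBasis.mem_closure_iff]
  rintro _ ⟨a, b, -, -, hab, rfl⟩ ⟨n, hn⟩
  obtain ⟨s, hs, hys, hmod⟩ := h b (by rwa [hn, Nat.coprime_add_mul_left_left])
  obtain ⟨c, hc⟩ := (Nat.modEq_iff_dvd' hys).1 hmod
  exact ⟨s, ⟨n + c, by rw [mul_add, ← add_assoc, ← hn, ← hc]; omega⟩, hs⟩

open Polynomial

theorem PadicInt.norm_lt_one_iff_toZMod_eq_zero {p : ℕ} [Fact p.Prime] (z : ℤ_[p]) :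
    ‖z‖ < 1 ↔ toZMod z = 0 := by
  rw [← RingHom.mem_ker, ker_toZMod, IsLocalRing.mem_maximalIdeal, mem_nonunits]

theorem PadicInt.norm_eq_one_iff_toZMod_ne_zero {p : ℕ} [Fact p.Prime] (z : ℤ_[p]) :
    ‖z‖ = 1 ↔ toZMod z ≠ 0 := by
  rw [ne_eq, ← norm_lt_one_iff_toZMod_eq_zero, not_lt]
  exact ⟨ge_of_eq, (norm_le_one z).antisymm⟩

theorem ZMod.exists_pow_eq_of_prime_pow {p : ℕ} [Fact p.Prime] {n : ℕ} (hn : (n : ZMod p) ≠ 0)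
    {c : ℤ} {y : ZMod p} (hy0 : y ≠ 0) (hy : y ^ n = c) (k : ℕ) :
    ∃ x : ZMod (p ^ k), x ^ n = c := by
  set a : ℤ_[p] := (y.val : ℤ_[p])
  have ha : PadicInt.toZMod a = y := by simp [a]
  have hF : (X ^ n - C c : ℤ[X]).aeval a = a ^ n - c := by simp
  have hF' : (X ^ n - C c : ℤ[X]).derivative.aeval a = n * a ^ (n - 1) := by
    simp [derivative_X_pow]
  have hderiv : ‖(n : ℤ_[p]) * a ^ (n - 1)‖ = 1 := by
    rw [PadicInt.norm_eq_one_iff_toZMod_ne_zero, map_mul, map_pow, map_natCast, ha]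
    exact mul_ne_zero hn (pow_ne_zero _ hy0)
  have hval : ‖a ^ n - c‖ < 1 := by
    rw [PadicInt.norm_lt_one_iff_toZMod_eq_zero, map_sub, map_pow, map_intCast, ha, hy, sub_self]
  obtain ⟨z, hz, -⟩ := hensels_lemma (F := X ^ n - C c) (a := a) (by
    rwa [hF, hF', hderiv, one_pow])
  have hz' : z ^ n = c := by simpa [sub_eq_zero] using hz
  exact ⟨PadicInt.toZModPow k z, by rw [← map_pow, hz', map_intCast]⟩

theorem ZMod.exists_pow_eq_of_coprime {m m' : ℕ} (h : m.Coprime m') {n : ℕ} {c : ℤ}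
    (h₁ : ∃ x : ZMod m, x ^ n = c) (h₂ : ∃ x : ZMod m', x ^ n = c) :
    ∃ x : ZMod (m * m'), x ^ n = c := by
  obtain ⟨x₁, hx₁⟩ := h₁
  obtain ⟨x₂, hx₂⟩ := h₂
  let e := ZMod.chineseRemainder h
  refine ⟨e.symm (x₁, x₂), e.injective ?_⟩
  rw [map_pow, e.apply_symm_apply, map_intCast, Prod.pow_mk, hx₁, hx₂]
  exact Prod.ext (by simp) (by simp)

theorem ZMod.isSquare_two_or_neg_two_or_neg_one {p : ℕ} [Fact p.Prime] (hp : p ≠ 2) :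
    IsSquare (2 : ZMod p) ∨ IsSquare (-2 : ZMod p) ∨ IsSquare (-1 : ZMod p) := by
  have hodd : p % 2 = 1 := (Fact.out : p.Prime).eq_two_or_odd.resolve_left hp
  rw [ZMod.exists_sq_eq_two_iff hp, ZMod.exists_sq_eq_neg_two_iff hp,
    ZMod.exists_sq_eq_neg_one_iff]
  omega

theorem pow_eight_sub_sixteen {R : Type*} [CommRing R] (x : R) :
    x ^ 8 - 16 = (x ^ 2 - 2) * (x ^ 2 + 2) * (x ^ 2 - 2 * x + 2) * (x ^ 2 + 2 * x + 2) := by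
  ring

theorem ZMod.exists_pow_eight_eq_sixteen_of_prime {p : ℕ} [Fact p.Prime] (hp : p ≠ 2) :
    ∃ y : ZMod p, y ^ 8 = 16 := by
  simp_rw [← sub_eq_zero (b := (16 : ZMod p)), pow_eight_sub_sixteen, mul_eq_zero]
  rcases ZMod.isSquare_two_or_neg_two_or_neg_one hp with ⟨s, hs⟩ | ⟨s, hs⟩ | ⟨s, hs⟩
  · exact ⟨s, .inl <| .inl <| .inl <| by rw [sq, ← hs, sub_self]⟩
  · exact ⟨s, .inl <| .inl <| .inr <| by rw [sq, ← hs, neg_add_cancel]⟩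
  · exact ⟨1 + s, .inl <| .inr <| by linear_combination -hs⟩

theorem ZMod.exists_pow_eight_eq_sixteen_of_odd {m : ℕ} (hm : Odd m) :
    ∃ x : ZMod m, x ^ 8 = 16 := by
  suffices ∃ x : ZMod m, x ^ 8 = ((16 : ℤ) : ZMod m) by simpa using this
  induction m using Nat.recOnPosPrimePosCoprime with
  | zero => simp at hm
  | one => exact ⟨0, Subsingleton.elim _ _⟩
  | prime_pow p k hp hk =>
    have : Fact p.Prime := ⟨hp⟩
    have hp2 : p ≠ 2 := by
      rintro rfl
      rw [Nat.odd_pow_iff hk.ne'] at hm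
      exact Nat.not_odd_iff_even.2 even_two hm
    have h2 := Ring.two_ne_zero (by rwa [ZMod.ringChar_zmod_n])
    obtain ⟨y, hy⟩ := ZMod.exists_pow_eight_eq_sixteen_of_prime hp2
    have h8 : ((8 : ℕ) : ZMod p) ≠ 0 := by
      rw [show ((8 : ℕ) : ZMod p) = 2 ^ 3 by norm_num]
      exact pow_ne_zero 3 h2
    have hy0 : y ≠ 0 := by
      rintro rfl
      exact pow_ne_zero 4 h2 (by linear_combination -hy)
    exact ZMod.exists_pow_eq_of_prime_pow h8 hy0 (by simpa) k
  | coprime a b _ _ hab iha ihb =>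
    rw [Nat.odd_mul] at hm
    exact ZMod.exists_pow_eq_of_coprime hab (iha hm.1) (ihb hm.2)

theorem Nat.exists_pow_eight_modEq_sixteen {b : ℕ} (hb : Odd b) (N : ℕ) :
    ∃ X, N ≤ X ∧ X ^ 8 ≡ 16 [MOD b] := by
  obtain ⟨x, hx⟩ := ZMod.exists_pow_eight_eq_sixteen_of_odd hb
  have : NeZero b := ⟨hb.pos.ne'⟩
  refine ⟨x.val + b * N, (Nat.le_mul_of_pos_left N hb.pos).trans (Nat.le_add_left _ _), ?_⟩
  rw [← ZMod.natCast_eq_natCast_iff]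
  simp [hx]

theorem PNat.pow_eight_ne_sixteen (x : ℕ+) : x ^ 8 ≠ 16 := by
  intro hx
  have hx' : (x : ℕ) ^ 8 = 16 := by simpa using congrArg PNat.val hx
  rcases Nat.lt_or_ge (x : ℕ) 2 with h | h
  · have : (x : ℕ) = 1 := by have := x.pos; omega
    simp [this] at hx'
  · have := Nat.pow_le_pow_left h 8
    omega

theorem eighth_powers_not_closed :
    ¬ IsClosed {y : ℕ+ | ∃ x : ℕ+, y = x ^ 8} ∧
    (16 : ℕ+) ∈ closure {y : ℕ+ | ∃ x : ℕ+, y = x ^ 8} ∧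
    (16 : ℕ+) ∉ {y : ℕ+ | ∃ x : ℕ+, y = x ^ 8} := by
  have hnot : (16 : ℕ+) ∉ {y : ℕ+ | ∃ x : ℕ+, y = x ^ 8} := fun ⟨x, hx⟩ =>
    x.pow_eight_ne_sixteen hx.symm
  have hclosure : (16 : ℕ+) ∈ closure {y : ℕ+ | ∃ x : ℕ+, y = x ^ 8} := by
    refine mem_closure_of_forall_modEq fun b hb => ?_
    have hodd : Odd b := ((Nat.coprime_pow_left_iff (n := 4) four_pos 2 b).1 hb).odd_of_left
    obtain ⟨X, hX, hmod⟩ := Nat.exists_pow_eight_modEq_sixteen hodd 2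
    let x : ℕ+ := ⟨X, by omega⟩
    have hx : ((x ^ 8 : ℕ+) : ℕ) = X ^ 8 := PNat.pow_coe x 8
    have hX8 : 2 ^ 8 ≤ X ^ 8 := Nat.pow_le_pow_left hX 8
    exact ⟨x ^ 8, ⟨x, rfl⟩, by rw [hx, PNat.val_ofNat]; omega, by rw [hx]; exact hmod.symm⟩
  exact ⟨fun hclosed => hnot (hclosed.closure_eq ▸ hclosure), hclosure, hnot⟩
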